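/- arXiv:1809.05944 — 7 statements merged into one kernel-verified Lean document; each statement's English description precedes it below -/
import Mathlib

section
/- Let R be a commutative ring and P₁, …, P_m ∈ Rⁿ with Pᵢ − Pⱼ ∈ D(n) for all i, j (the nil-square i-structure condition). Then for every affine combination λ ∈ Rᵐ with ∑ λⱼ = 1 and every index i, the vector (∑ⱼ λⱼ Pⱼ) − Pᵢ lies in D(n). -/
/-- if the points `P₁, …, P_m ∈ Rⁿ` have all pairwise differences in `D(n)`
(nil-square i-structure) then for any affine combination `λ` (coefficients summing to 1)
and any index `i`, the vector `(∑ⱼ λⱼ Pⱼ) − Pᵢ` lies in `D(n)`. -/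
theorem stmt3 {R : Type*} [CommRing R] {n m : ℕ} (P : Fin m → (Fin n → R))
    (hP : ∀ i j : Fin m, ∀ a b : Fin n, (P i - P j) a * (P i - P j) b = 0)
    (lam : Fin m → R) (hlam : ∑ j, lam j = 1) (i : Fin m) :
    ∀ a b : Fin n,
      ((∑ j, lam j • P j) - P i) a * ((∑ j, lam j • P j) - P i) b = 0 := by
  intro a b
  have key : ∀ j k : Fin m, ∀ x y : Fin n,
      (P j x - P i x) * (P k y - P i y) + (P k x - P i x) * (P j y - P i y) = 0 := by
    intro j k x y
    have h1 := hP j i x y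
    have h2 := hP k i x y
    have h3 := hP j k x y
    simp only [Pi.sub_apply] at h1 h2 h3
    linear_combination h1 + h2 - h3
  have heval : ∀ c : Fin n,
      ((∑ j, lam j • P j) - P i) c = ∑ j, lam j * (P j c - P i c) := by
    intro c
    simp only [Pi.sub_apply, Finset.sum_apply, Pi.smul_apply, smul_eq_mul, mul_sub]
    rw [Finset.sum_sub_distrib, ← Finset.sum_mul, hlam, one_mul]
  rw [heval a, heval b, Finset.sum_mul_sum]
  rw [← Finset.sum_product']
  apply Finset.sum_involution (fun p _ => p.swap)
  · intro p hp
    simp only [Prod.fst_swap, Prod.snd_swap]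
    have := key p.1 p.2 a b
    ring_nf
    ring_nf at this
    linear_combination lam p.1 * lam p.2 * this
  · intro p hp hne
    intro h
    apply hne
    have h1 : p.1 = p.2 := by
      have := congrArg Prod.fst h
      simpa using this.symm
    rw [h1]
    have := key p.2 p.2 a a
    have hz : (P p.2 a - P i a) * (P p.2 b - P i b) = 0 := by
      have h0 := hP p.2 i a b
      simpa [Pi.sub_apply] using h0
    rw [mul_mul_mul_comm, hz, mul_zero]
  · intro p hp; simp
  · intro p hp; simp
end

section
/- Let R be a commutative ring, V = Rⁿ, and define DN_k(V) as the set of (k+1)-tuples (v₁, …, v_{k+1}) of elements of D_k(n) on which every (k+1)-multilinear form on V vanishes. Let P₁, …, P_m ∈ Rⁿ satisfy the kth-order i-structure condition: for all index choices i_ℓ ≠ j_ℓ, the tuple (P_{i₁} − P_{j₁}, …, P_{i_{k+1}} − P_{j_{k+1}}) lies in DN_k(V). Then for affine combinations λ¹, …, λᵖ ∈ Rᵐ (each summing to 1), the points Q_s = ∑ⱼ λ^s_j Pⱼ again satisfy the kth-order i-structure condition. -/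
/-- `d ∈ D_k(n)`: every product of `k+1` coordinates of `d` vanishes. -/
def Dk (R : Type*) [CommRing R] (n k : ℕ) : Set (Fin n → R) :=
  {d | ∀ f : Fin (k + 1) → Fin n, ∏ i, d (f i) = 0}

/-- `DN_k(Rⁿ)`: `(k+1)`-tuples of elements of `D_k(n)` annihilated by every
`(k+1)`-multilinear form on `Rⁿ`. -/
def DN (R : Type*) [CommRing R] (n k : ℕ) (v : Fin (k + 1) → (Fin n → R)) : Prop :=
  (∀ ℓ, v ℓ ∈ Dk R n k) ∧
    ∀ φ : MultilinearMap R (fun _ : Fin (k + 1) => (Fin n → R)) R, φ v = 0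

/-- The `k`th-order i-structure condition on an `m`-tuple of points of `Rⁿ`. -/
def iStr (R : Type*) [CommRing R] (n k m : ℕ) (P : Fin m → (Fin n → R)) : Prop :=
  ∀ i j : Fin (k + 1) → Fin m, (∀ ℓ, i ℓ ≠ j ℓ) →
    DN R n k (fun ℓ => P (i ℓ) - P (j ℓ))

lemma decomp {R : Type*} [CommRing R] {n m : ℕ} (P : Fin m → Fin n → R)
    (c d : Fin m → R) (hc : ∑ a, c a = 1) (hd : ∑ a, d a = 1) :
    (∑ a, c a • P a) - (∑ b, d b • P b)
      = ∑ q : Fin m × Fin m, (c q.1 * d q.2) • (P q.1 - P q.2) := by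
  have h1 : ∀ a, ∑ b, (c a * d b) • P a = c a • P a := fun a => by
    rw [← Finset.sum_smul, ← Finset.mul_sum, hd, mul_one]
  have h2 : ∑ a, ∑ b, (c a * d b) • P b = ∑ b, d b • P b := by
    rw [Finset.sum_comm]
    refine Finset.sum_congr rfl fun b _ => ?_
    rw [← Finset.sum_smul, ← Finset.sum_mul, hc, one_mul]
  rw [Fintype.sum_prod_type]
  simp only [smul_sub, Finset.sum_sub_distrib]
  rw [h2]
  congr 1
  exact (Finset.sum_congr rfl fun a _ => h1 a).symm

lemma key {R : Type*} [CommRing R] {n k m : ℕ} (P : Fin m → Fin n → R)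
    (c d : Fin (k + 1) → Fin m → R) (hc : ∀ ℓ, ∑ a, c ℓ a = 1) (hd : ∀ ℓ, ∑ a, d ℓ a = 1)
    (φ : MultilinearMap R (fun _ : Fin (k + 1) => (Fin n → R)) R)
    (h : ∀ i j : Fin (k + 1) → Fin m, (∀ ℓ, i ℓ ≠ j ℓ) →
      φ (fun ℓ => P (i ℓ) - P (j ℓ)) = 0) :
    φ (fun ℓ => (∑ a, c ℓ a • P a) - (∑ b, d ℓ b • P b)) = 0 := by
  have hrw : (fun ℓ => (∑ a, c ℓ a • P a) - (∑ b, d ℓ b • P b))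
      = fun ℓ => ∑ q : Fin m × Fin m, (c ℓ q.1 * d ℓ q.2) • (P q.1 - P q.2) :=
    funext fun ℓ => decomp P (c ℓ) (d ℓ) (hc ℓ) (hd ℓ)
  rw [hrw, MultilinearMap.map_sum]
  refine Finset.sum_eq_zero fun r _ => ?_
  by_cases hr : ∀ ℓ, (r ℓ).1 ≠ (r ℓ).2
  · rw [MultilinearMap.map_smul_univ, h (fun ℓ => (r ℓ).1) (fun ℓ => (r ℓ).2) hr, smul_zero]
  · push_neg at hr
    obtain ⟨ℓ, hℓ⟩ := hr
    exact φ.map_coord_zero ℓ (by simp [hℓ])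

/-- The coordinate-product multilinear form `v ↦ ∏ ℓ, v ℓ (f ℓ)`. -/
noncomputable def prodForm (R : Type*) [CommRing R] (n k : ℕ) (f : Fin (k + 1) → Fin n) :
    MultilinearMap R (fun _ : Fin (k + 1) => (Fin n → R)) R :=
  (MultilinearMap.mkPiAlgebra R (Fin (k + 1)) R).compLinearMap fun ℓ => LinearMap.proj (f ℓ)

@[simp] lemma prodForm_apply {R : Type*} [CommRing R] {n k : ℕ} (f : Fin (k + 1) → Fin n)
    (v : Fin (k + 1) → (Fin n → R)) : prodForm R n k f v = ∏ ℓ, v ℓ (f ℓ) := by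
  simp [prodForm]

/-- affine combinations of a tuple satisfying the `k`th-order i-structure
condition again satisfy the `k`th-order i-structure condition. -/
theorem stmt4 {R : Type*} [CommRing R] {n k m p : ℕ}
    (P : Fin m → (Fin n → R)) (hP : iStr R n k m P)
    (lam : Fin p → Fin m → R) (hlam : ∀ s, ∑ j, lam s j = 1) :
    iStr R n k p (fun s => ∑ j, lam s j • P j) := by
  intro i j hij
  constructor
  · intro ℓ₀ f
    have := key P (fun _ => lam (i ℓ₀)) (fun _ => lam (j ℓ₀))
      (fun _ => hlam (i ℓ₀)) (fun _ => hlam (j ℓ₀)) (prodForm R n k f)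
      (fun i' j' h' => (hP i' j' h').2 (prodForm R n k f))
    simpa using this
  · intro φ
    exact key P (fun ℓ => lam (i ℓ)) (fun ℓ => lam (j ℓ))
      (fun ℓ => hlam (i ℓ)) (fun ℓ => hlam (j ℓ)) φ
      (fun i' j' h' => (hP i' j' h').2 φ)
end

section
/- Let R be a commutative ring, P, Q, S ∈ Rⁿ with Q − P ∈ D(n) and S − P ∈ D(n), and let Γ be a symmetric bilinear map Rⁿ × Rⁿ → Rⁿ. Define the second-order affine action μ·⟨P₁,…,P_k⟩ = ∑ μⱼPⱼ + ½(Γ[∑ μⱼPⱼ − P₁]² − ∑ μⱼ Γ[Pⱼ − P₁]²) for affine combinations μ. Then (−1, 1, 1)·⟨P, Q, S⟩ = Q + S − P + Γ(Q − P, S − P), i.e. the i-affine combination with weights (−1,1,1) recovers the connection λ(P,Q,S). -/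
/-- for `Q − P, S − P ∈ D(n)` and a symmetric bilinear `Γ`, the
second-order affine action with weights `(−1, 1, 1)` on `⟨P, Q, S⟩` recovers the
connection value `Q + S − P + Γ(Q−P, S−P)`. -/
theorem stmt11 {R : Type*} [CommRing R] [Algebra ℚ R] {n : ℕ}
    (Γ : (Fin n → R) →ₗ[R] (Fin n → R) →ₗ[R] (Fin n → R))
    (hsymm : ∀ u v, Γ u v = Γ v u)
    (P Q S : Fin n → R)
    (hQ : ∀ a b : Fin n, (Q - P) a * (Q - P) b = 0)
    (hS : ∀ a b : Fin n, (S - P) a * (S - P) b = 0) :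
    (∑ j : Fin 3, (![-1, 1, 1] : Fin 3 → R) j • ![P, Q, S] j) +
      (1 / 2 : ℚ) •
        (Γ ((∑ j : Fin 3, (![-1, 1, 1] : Fin 3 → R) j • ![P, Q, S] j) - P)
            ((∑ j : Fin 3, (![-1, 1, 1] : Fin 3 → R) j • ![P, Q, S] j) - P) -
          ∑ j : Fin 3, (![-1, 1, 1] : Fin 3 → R) j •
            Γ (![P, Q, S] j - P) (![P, Q, S] j - P)) =
    Q + S - P + Γ (Q - P) (S - P) := by
  simp only [Fin.sum_univ_three, Matrix.cons_val_zero, Matrix.cons_val_one, Matrix.head_cons,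
    Matrix.cons_val_two, Matrix.tail_cons, neg_smul, one_smul, sub_self, map_zero,
    LinearMap.zero_apply, neg_zero]
  have key : -P + Q + S - P = (Q - P) + (S - P) := by abel
  rw [key, map_add Γ, LinearMap.add_apply, map_add, map_add, hsymm (S - P) (Q - P)]
  have : Γ (Q-P) (Q-P) + Γ (Q-P) (S-P) + (Γ (Q-P) (S-P) + Γ (S-P) (S-P)) -
      (0 + Γ (Q-P) (Q-P) + Γ (S-P) (S-P)) = (2:ℚ) • Γ (Q-P) (S-P) := by
    rw [two_smul]; abel
  rw [this, smul_smul]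
  norm_num
  abel
end

section
/- Let R be a commutative ℚ-algebra, Γ : Rⁿ × Rⁿ → Rⁿ a symmetric bilinear map, and P₁, …, P_k ∈ Rⁿ satisfying: all pairwise differences Pᵢ − Pⱼ lie in D₂(n) and every trilinear form on Rⁿ vanishes on triples of pairwise differences. Then for affine combinations λ¹, …, λᵐ ∈ Rᵏ and μ ∈ Rᵐ, the purely algebraic associativity identity holds: Γ[∑ⱼ(∑_ℓ μ_ℓ λ^ℓ_j)Pⱼ − P₁]² = Γ[∑ⱼ(∑_ℓ μ_ℓ λ^ℓ_j)Pⱼ − ∑ⱼ λ¹ⱼ Pⱼ]² + ∑_ℓ μ_ℓ (Γ[∑ⱼ λ^ℓⱼ Pⱼ − P₁]² − Γ[∑ⱼ λ^ℓⱼ Pⱼ − ∑ⱼ λ¹ⱼ Pⱼ]²). -/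
lemma key_assoc {R V : Type*} [CommRing R] [AddCommGroup V] [Module R V]
    (Γ : V →ₗ[R] V →ₗ[R] V) {m : ℕ} (μ : Fin (m + 1) → R) (hμ : ∑ ℓ, μ ℓ = 1)
    (Q : Fin (m + 1) → V) (A B : V) :
    Γ ((∑ ℓ, μ ℓ • Q ℓ) - A) ((∑ ℓ, μ ℓ • Q ℓ) - A) =
      Γ ((∑ ℓ, μ ℓ • Q ℓ) - B) ((∑ ℓ, μ ℓ • Q ℓ) - B) +
        ∑ ℓ, μ ℓ • (Γ (Q ℓ - A) (Q ℓ - A) - Γ (Q ℓ - B) (Q ℓ - B)) := by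
  set S : V := ∑ ℓ, μ ℓ • Q ℓ with hS
  have h1 : ∀ Y : V, ∑ ℓ, μ ℓ • Γ (Q ℓ) Y = Γ S Y := by
    intro Y
    rw [hS, map_sum, LinearMap.sum_apply]
    simp [map_smul]
  have h2 : ∀ Y : V, ∑ ℓ, μ ℓ • Γ Y (Q ℓ) = Γ Y S := by
    intro Y
    rw [hS, map_sum]
    simp [map_smul]
  have h3 : ∀ Y : V, ∑ ℓ, μ ℓ • Y = Y := by
    intro Y
    rw [← Finset.sum_smul, hμ, one_smul]
  have hbody : ∀ ℓ, Γ (Q ℓ - A) (Q ℓ - A) - Γ (Q ℓ - B) (Q ℓ - B) =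
      (Γ (Q ℓ) B + Γ B (Q ℓ)) - (Γ (Q ℓ) A + Γ A (Q ℓ)) + (Γ A A - Γ B B) := by
    intro ℓ
    simp only [map_sub, LinearMap.sub_apply]
    abel
  simp only [hbody, smul_sub, smul_add, Finset.sum_add_distrib, Finset.sum_sub_distrib,
    h1, h2, h3]
  simp only [map_sub, LinearMap.sub_apply]
  abel

/-- the symmetric-bilinear associativity identity for the Christoffel
term of the second-order affine action, for points satisfying the second-order
i-structure condition and affine combinations `λ¹, …, λᵐ` and `μ`. -/
theorem stmt13 {R : Type*} [CommRing R] [Algebra ℚ R] {n q m : ℕ}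
    (Γ : (Fin n → R) →ₗ[R] (Fin n → R) →ₗ[R] (Fin n → R))
    (hsymm : ∀ u v, Γ u v = Γ v u)
    (P : Fin (q + 1) → (Fin n → R))
    (hD : ∀ i j : Fin (q + 1), P i - P j ∈ Dk R n 2)
    (htri : ∀ i j : Fin 3 → Fin (q + 1), (∀ ℓ, i ℓ ≠ j ℓ) →
      ∀ φ : MultilinearMap R (fun _ : Fin 3 => (Fin n → R)) R,
        φ (fun ℓ => P (i ℓ) - P (j ℓ)) = 0)
    (lam : Fin (m + 1) → Fin (q + 1) → R) (hlam : ∀ ℓ, ∑ j, lam ℓ j = 1)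
    (μ : Fin (m + 1) → R) (hμ : ∑ ℓ, μ ℓ = 1) :
    Γ ((∑ j, (∑ ℓ, μ ℓ * lam ℓ j) • P j) - P 0)
        ((∑ j, (∑ ℓ, μ ℓ * lam ℓ j) • P j) - P 0) =
      Γ ((∑ j, (∑ ℓ, μ ℓ * lam ℓ j) • P j) - ∑ j, lam 0 j • P j)
          ((∑ j, (∑ ℓ, μ ℓ * lam ℓ j) • P j) - ∑ j, lam 0 j • P j) +
        ∑ ℓ, μ ℓ •
          (Γ ((∑ j, lam ℓ j • P j) - P 0) ((∑ j, lam ℓ j • P j) - P 0) -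
            Γ ((∑ j, lam ℓ j • P j) - ∑ j, lam 0 j • P j)
              ((∑ j, lam ℓ j • P j) - ∑ j, lam 0 j • P j)) := by
  have hS : (∑ j, (∑ ℓ, μ ℓ * lam ℓ j) • P j) = ∑ ℓ, μ ℓ • ∑ j, lam ℓ j • P j := by
    simp only [Finset.smul_sum, smul_smul]
    rw [Finset.sum_comm]
    simp [Finset.sum_smul]
  rw [hS]
  exact key_assoc Γ μ hμ (fun ℓ => ∑ j, lam ℓ j • P j) (P 0) (∑ j, lam 0 j • P j)
end

section
/- Let R be a commutative ℚ-algebra, let f : Rⁿ → Rᵐ be given by a polynomial map, and let P, Q ∈ Rⁿ with Q − P ∈ D_k(n). Then f(Q) − f(P) = ∑_{ℓ=1}^{k} (1/ℓ!) D^ℓf(P)[Q − P]^ℓ, where D^ℓf(P) is the ℓ-th formal derivative of f at P, a symmetric ℓ-linear map; all terms of order > k vanish. -/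
/-- The `ℓ`-th formal derivative of the polynomial map `f : Rⁿ → Rᵐ` at `P`,
evaluated on the `ℓ`-tuple `(v, …, v)`:
`D^ℓf(P)[v]^ℓ = ∑_{(i₁,…,i_ℓ)} (∂_{i₁}⋯∂_{i_ℓ} f)(P) · v_{i₁} ⋯ v_{i_ℓ}`. -/
noncomputable def Dl {R : Type*} [CommRing R] {n m : ℕ}
    (f : Fin m → MvPolynomial (Fin n) R) (ℓ : ℕ) (P v : Fin n → R) : Fin m → R :=
  fun j => ∑ t : Fin ℓ → Fin n,
    MvPolynomial.eval P
        ((List.ofFn t).foldl (fun g i => MvPolynomial.pderiv i g) (f j)) *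
      ∏ s, v (t s)

open Polynomial MvPolynomial

theorem Polynomial.eval_one_sub_eval_zero_of_natDegree_le {R : Type*} [CommRing R] {q : R[X]}
    {k : ℕ} (hq : q.natDegree ≤ k) :
    q.eval 1 - q.eval 0 = ∑ ℓ ∈ Finset.Icc 1 k, q.coeff ℓ := by
  rw [eval_eq_sum_range' (Nat.lt_succ_of_le hq), Finset.sum_range_eq_add_Ico _ k.succ_pos,
    coeff_zero_eq_eval_zero]
  simp [Finset.Ico_add_one_right_eq_Icc]

section TaylorTerm

variable {R : Type*} [CommRing R] {n : ℕ}

/-- The scalar version of `Dl`: `Dl f ℓ P v j = taylorTerm (f j) ℓ P v` definitionally. -/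
noncomputable def taylorTerm (p : MvPolynomial (Fin n) R) (ℓ : ℕ) (P v : Fin n → R) : R :=
  ∑ t : Fin ℓ → Fin n,
    MvPolynomial.eval P ((List.ofFn t).foldl (fun g i => MvPolynomial.pderiv i g) p) *
      ∏ s, v (t s)

theorem taylorTerm_zero (p : MvPolynomial (Fin n) R) (P v : Fin n → R) :
    taylorTerm p 0 P v = MvPolynomial.eval P p := by
  simp [taylorTerm]

theorem taylorTerm_succ (p : MvPolynomial (Fin n) R) (ℓ : ℕ) (P v : Fin n → R) :
    taylorTerm p (ℓ + 1) P v = ∑ i, v i * taylorTerm (pderiv i p) ℓ P v := by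
  rw [taylorTerm, ← (Fin.consEquiv fun _ => Fin n).sum_comp, Fintype.sum_prod_type]
  refine Finset.sum_congr rfl fun i _ => ?_
  rw [taylorTerm, Finset.mul_sum]
  refine Finset.sum_congr rfl fun t _ => ?_
  simp only [Fin.consEquiv_apply, List.ofFn_succ, Fin.cons_zero, Fin.cons_succ, List.foldl_cons,
    Fin.prod_univ_succ]
  ring

theorem taylorTerm_eq_zero_of_mem_Dk {k ℓ : ℕ} {v : Fin n → R} (hv : v ∈ Dk R n k) (hℓ : k < ℓ)
    (p : MvPolynomial (Fin n) R) (P : Fin n → R) : taylorTerm p ℓ P v = 0 := by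
  refine Finset.sum_eq_zero fun t _ => ?_
  have hdvd := Finset.prod_dvd_prod_of_subset _ _ (fun s => v (t s))
    (Finset.subset_univ (Finset.univ.map (Fin.castLEEmb hℓ)))
  rw [Finset.prod_map, Fin.coe_castLEEmb, hv (fun s => t (Fin.castLE hℓ s)), zero_dvd_iff] at hdvd
  rw [hdvd, mul_zero]

noncomputable def restrictToLine (P v : Fin n → R) : MvPolynomial (Fin n) R →ₐ[R] R[X] :=
  aeval fun i => Polynomial.C (P i) + Polynomial.C (v i) * Polynomial.X

theorem eval_restrictToLine (P v : Fin n → R) (x : R) (p : MvPolynomial (Fin n) R) :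
    (restrictToLine P v p).eval x = MvPolynomial.eval (P + x • v) p := by
  induction p using MvPolynomial.induction_on with
  | C a => simp [restrictToLine]
  | add p q hp hq => simp [hp, hq]
  | mul_X p i hp =>
    rw [map_mul, Polynomial.eval_mul, hp]
    simp [restrictToLine, mul_comm x]

theorem derivative_restrictToLine (P v : Fin n → R) (p : MvPolynomial (Fin n) R) :
    derivative (restrictToLine P v p) =
      ∑ i, Polynomial.C (v i) * restrictToLine P v (pderiv i p) := by
  induction p using MvPolynomial.induction_on with
  | C a => simp [restrictToLine]
  | add p q hp hq => simp [hp, hq, Finset.sum_add_distrib, mul_add]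
  | mul_X p i hp =>
    have hX : restrictToLine P v (X i) = Polynomial.C (P i) + Polynomial.C (v i) * Polynomial.X :=
      aeval_X _ _
    calc derivative (restrictToLine P v (p * X i))
        = derivative (restrictToLine P v p) * restrictToLine P v (X i) +
            restrictToLine P v p * Polynomial.C (v i) := by
          simp [hX]
      _ = ∑ j, Polynomial.C (v j) * restrictToLine P v (pderiv j (p * X i)) := by
          simp only [hp, pderiv_mul, pderiv_X, map_add, map_mul, mul_add, Finset.sum_add_distrib,
            Finset.sum_mul]
          congr 1
          · exact Finset.sum_congr rfl fun _ _ => by ring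
          · simp [Pi.single_apply, mul_comm]

theorem coeff_restrictToLine_mul_factorial (P v : Fin n → R) (ℓ : ℕ)
    (p : MvPolynomial (Fin n) R) :
    (restrictToLine P v p).coeff ℓ * ℓ.factorial = taylorTerm p ℓ P v := by
  induction ℓ generalizing p with
  | zero => simp [taylorTerm_zero, coeff_zero_eq_eval_zero, eval_restrictToLine]
  | succ ℓ ih =>
    calc (restrictToLine P v p).coeff (ℓ + 1) * (ℓ + 1).factorial
        = (derivative (restrictToLine P v p)).coeff ℓ * ℓ.factorial := by
          rw [coeff_derivative, Nat.factorial_succ]; push_cast; ring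
      _ = taylorTerm p (ℓ + 1) P v := by
          simp only [derivative_restrictToLine, finsetSum_coeff, Polynomial.coeff_C_mul,
            Finset.sum_mul, mul_assoc, ih, taylorTerm_succ]

theorem coeff_restrictToLine [Algebra ℚ R] (P v : Fin n → R) (ℓ : ℕ)
    (p : MvPolynomial (Fin n) R) :
    (restrictToLine P v p).coeff ℓ = (ℓ.factorial : ℚ)⁻¹ • taylorTerm p ℓ P v := by
  rw [← coeff_restrictToLine_mul_factorial, ← nsmul_eq_mul', ← Nat.cast_smul_eq_nsmul ℚ,
    smul_smul, inv_mul_cancel₀ (by positivity), one_smul]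

end TaylorTerm

/-- Taylor expansion of a polynomial map `f : Rⁿ → Rᵐ` on a `k`-th
order infinitesimal difference: if `Q − P ∈ D_k(n)` then
`f(Q) − f(P) = ∑_{ℓ=1}^{k} (1/ℓ!) D^ℓf(P)[Q−P]^ℓ`, and all terms of order `> k`
vanish. -/
theorem stmt15 {R : Type*} [CommRing R] [Algebra ℚ R] {n m k : ℕ}
    (f : Fin m → MvPolynomial (Fin n) R) (P Q : Fin n → R)
    (h : Q - P ∈ Dk R n k) :
    ((fun j => MvPolynomial.eval Q (f j) - MvPolynomial.eval P (f j)) =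
      ∑ ℓ ∈ Finset.Icc 1 k, ((ℓ.factorial : ℚ)⁻¹ • Dl f ℓ P (Q - P))) ∧
    ∀ ℓ, k < ℓ → Dl f ℓ P (Q - P) = 0 := by
  refine ⟨funext fun j => ?_, fun ℓ hℓ => funext fun j => taylorTerm_eq_zero_of_mem_Dk h hℓ _ _⟩
  have hdeg : (restrictToLine P (Q - P) (f j)).natDegree ≤ k :=
    natDegree_le_iff_coeff_eq_zero.2 fun ℓ hℓ => by
      rw [coeff_restrictToLine, taylorTerm_eq_zero_of_mem_Dk h hℓ, smul_zero]
  have hsum := eval_one_sub_eval_zero_of_natDegree_le hdeg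
  simp only [eval_restrictToLine, coeff_restrictToLine, one_smul, zero_smul, add_zero,
    add_sub_cancel] at hsum
  rw [Finset.sum_apply]
  exact hsum
end

section
/- Let R be a commutative ℚ-algebra, P₁, P₂, P₃ ∈ Rⁿ a triple in the second-order i-structure (all trilinear forms vanish on triples of pairwise differences, differences in D₂(n)), f : Rⁿ → Rᵐ a polynomial map, and φ a symmetric trilinear form on Rᵐ. Then φ(f(P₂) − f(P₁), f(P₃) − f(P₁), f(P₃) − f(P₂)) = ½(φ(Df(P₁)[P₂−P₁], Df(P₁)[P₂−P₁], D²f(P₁)[P₃−P₁]²) − φ(Df(P₁)[P₃−P₁], Df(P₁)[P₃−P₁], D²f(P₁)[P₂−P₁]²)). -/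
open Pointwise

lemma eval_sub_mem {R : Type*} [CommRing R] {n : ℕ} (Q d : Fin n → R)
    (g : MvPolynomial (Fin n) R) :
    MvPolynomial.eval (Q + d) g - MvPolynomial.eval Q g ∈ Ideal.span (Set.range d) := by
  induction g using MvPolynomial.induction_on with
  | C a => simp
  | add p q hp hq =>
      have := Ideal.add_mem _ hp hq
      convert this using 1
      simp only [map_add]; ring
  | mul_X p i hp =>
      have h1 : MvPolynomial.eval (Q + d) (p * MvPolynomial.X i)
            - MvPolynomial.eval Q (p * MvPolynomial.X i)
          = (MvPolynomial.eval (Q + d) p - MvPolynomial.eval Q p) * Q i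
            + MvPolynomial.eval (Q + d) p * d i := by
        simp only [map_mul, MvPolynomial.eval_X, Pi.add_apply]; ring
      rw [h1]
      exact Ideal.add_mem _ (Ideal.mul_mem_right _ _ hp)
        (Ideal.mul_mem_left _ _ (Ideal.subset_span ⟨i, rfl⟩))

lemma tri_zero {R : Type*} [CommRing R] {m : ℕ}
    (φ : MultilinearMap R (fun _ : Fin 3 => (Fin m → R)) R)
    (I : Ideal R) (hI : ∀ x ∈ I, ∀ y ∈ I, ∀ z ∈ I, x * y * z = 0)
    (X : Fin 3 → (Fin m → R)) (hX : ∀ ℓ a, X ℓ a ∈ I) :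
    φ X = 0 := by
  have hrep : X = fun ℓ => ∑ a : Fin m, X ℓ a • (Pi.single a 1 : Fin m → R) := by
    funext ℓ b
    simp [Pi.single_apply]
  rw [hrep, MultilinearMap.map_sum]
  apply Finset.sum_eq_zero
  intro r _
  rw [MultilinearMap.map_smul_univ, Fin.prod_univ_three,
    hI _ (hX 0 _) _ (hX 1 _) _ (hX 2 _), zero_smul]

/-- for a second-order i-triple `(P₁,P₂,P₃)` in `Rⁿ`, a polynomial map
`f : Rⁿ → Rᵐ` and a symmetric trilinear form `φ` on `Rᵐ`,
`φ(f(P₂)−f(P₁), f(P₃)−f(P₁), f(P₃)−f(P₂)) =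
  ½(φ(Df(P₁)[P₂−P₁], Df(P₁)[P₂−P₁], D²f(P₁)[P₃−P₁]²)
    − φ(Df(P₁)[P₃−P₁], Df(P₁)[P₃−P₁], D²f(P₁)[P₂−P₁]²))`. -/
theorem stmt17 {R : Type*} [CommRing R] [Algebra ℚ R] {n m : ℕ}
    (P : Fin 3 → (Fin n → R))
    (hD : ∀ i j : Fin 3, P i - P j ∈ Dk R n 2)
    (htri : ∀ i j : Fin 3 → Fin 3, (∀ ℓ, i ℓ ≠ j ℓ) →
      ∀ ψ : MultilinearMap R (fun _ : Fin 3 => (Fin n → R)) R,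
        ψ (fun ℓ => P (i ℓ) - P (j ℓ)) = 0)
    (f : Fin m → MvPolynomial (Fin n) R)
    (φ : MultilinearMap R (fun _ : Fin 3 => (Fin m → R)) R)
    (hφ : ∀ (σ : Equiv.Perm (Fin 3)) (x : Fin 3 → (Fin m → R)), φ (x ∘ σ) = φ x) :
    φ ![(fun i => MvPolynomial.eval (P 1) (f i)) - fun i => MvPolynomial.eval (P 0) (f i),
        (fun i => MvPolynomial.eval (P 2) (f i)) - fun i => MvPolynomial.eval (P 0) (f i),
        (fun i => MvPolynomial.eval (P 2) (f i)) - fun i => MvPolynomial.eval (P 1) (f i)] =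
      (1 / 2 : ℚ) •
        (φ ![Dl f 1 (P 0) (P 1 - P 0), Dl f 1 (P 0) (P 1 - P 0), Dl f 2 (P 0) (P 2 - P 0)] -
          φ ![Dl f 1 (P 0) (P 2 - P 0), Dl f 1 (P 0) (P 2 - P 0), Dl f 2 (P 0) (P 1 - P 0)]) := by
  -- the set of coordinates of the two basic differences
  set S : Set R := Set.range (fun p : Fin 2 × Fin n => (P p.1.succ - P 0) p.2) with hS
  set I : Ideal R := Ideal.span S with hIdef
  -- any product of three coordinates of differences from `P 0` vanishes
  have hkey : ∀ (i : Fin 3 → Fin 3), (∀ ℓ, i ℓ ≠ 0) → ∀ a : Fin 3 → Fin n,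
      (∏ ℓ, (P (i ℓ) - P 0) (a ℓ)) = 0 := by
    intro i hi a
    have := htri i 0 hi
      ((MultilinearMap.mkPiAlgebra R (Fin 3) R).compLinearMap
        (fun ℓ => LinearMap.proj (a ℓ)))
    simpa using this
  have hSI : ∀ x ∈ S, x ∈ I := fun x hx => Ideal.subset_span hx
  have hI : ∀ x ∈ I, ∀ y ∈ I, ∀ z ∈ I, x * y * z = 0 := by
    intro x hx y hy z hz
    have hmem : x * y * z ∈ I * I * I :=
      Ideal.mul_mem_mul (Ideal.mul_mem_mul hx hy) hz
    have : I * I * I = Ideal.span (S * S * S) := by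
      rw [hIdef, Ideal.span_mul_span', Ideal.span_mul_span']
    rw [this] at hmem
    have hbot : Ideal.span (S * S * S) = ⊥ := by
      rw [Ideal.span_eq_bot]
      rintro w hw
      rw [Set.mem_mul] at hw
      obtain ⟨u, hu, s3, hs3, rfl⟩ := hw
      rw [Set.mem_mul] at hu
      obtain ⟨s1, hs1, s2, hs2, rfl⟩ := hu
      obtain ⟨⟨k1, a1⟩, rfl⟩ := hs1
      obtain ⟨⟨k2, a2⟩, rfl⟩ := hs2
      obtain ⟨⟨k3, a3⟩, rfl⟩ := hs3
      have := hkey ![k1.succ, k2.succ, k3.succ]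
        (by intro ℓ; fin_cases ℓ <;> simp [Fin.succ_ne_zero]) ![a1, a2, a3]
      simpa [Fin.prod_univ_three] using this
    rw [hbot] at hmem
    simpa using hmem
  -- membership facts
  have h10 : ∀ a, (P 1 - P 0) a ∈ I := by
    intro a; exact hSI _ ⟨(0, a), by simp⟩
  have h20 : ∀ a, (P 2 - P 0) a ∈ I := by
    intro a; exact hSI _ ⟨(1, a), by simp⟩
  have h21 : ∀ a, (P 2 - P 1) a ∈ I := by
    intro a
    have : (P 2 - P 1) a = (P 2 - P 0) a - (P 1 - P 0) a := by simp
    rw [this]; exact sub_mem (h20 a) (h10 a)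
  -- evaluation differences lie in I
  have heval : ∀ (Q d : Fin n → R), (∀ a, d a ∈ I) → ∀ j,
      MvPolynomial.eval (Q + d) (f j) - MvPolynomial.eval Q (f j) ∈ I := by
    intro Q d hd j
    have := eval_sub_mem Q d (f j)
    refine Ideal.span_le.2 ?_ this
    rintro x ⟨a, rfl⟩; exact hd a
  have hev10 : ∀ j, MvPolynomial.eval (P 1) (f j) - MvPolynomial.eval (P 0) (f j) ∈ I := by
    intro j
    have := heval (P 0) (P 1 - P 0) h10 j
    simpa using this
  have hev20 : ∀ j, MvPolynomial.eval (P 2) (f j) - MvPolynomial.eval (P 0) (f j) ∈ I := by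
    intro j
    have := heval (P 0) (P 2 - P 0) h20 j
    simpa using this
  have hev21 : ∀ j, MvPolynomial.eval (P 2) (f j) - MvPolynomial.eval (P 1) (f j) ∈ I := by
    intro j
    have := heval (P 1) (P 2 - P 1) h21 j
    simpa using this
  -- Dl coordinates lie in I
  have hDl1 : ∀ (v : Fin n → R), (∀ a, v a ∈ I) → ∀ j, Dl f 1 (P 0) v j ∈ I := by
    intro v hv j
    apply Ideal.sum_mem
    intro t _
    have : (∏ s : Fin 1, v (t s)) = v (t 0) := by simp
    rw [this]
    exact Ideal.mul_mem_left _ _ (hv _)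
  have hDl2 : ∀ (v : Fin n → R), (∀ a, v a ∈ I) → ∀ j, Dl f 2 (P 0) v j ∈ I := by
    intro v hv j
    apply Ideal.sum_mem
    intro t _
    have : (∏ s : Fin 2, v (t s)) = v (t 0) * v (t 1) := by simp [Fin.prod_univ_two]
    rw [this]
    exact Ideal.mul_mem_left _ _ (Ideal.mul_mem_right _ _ (hv _))
  -- both sides vanish
  have hLHS : φ ![(fun i => MvPolynomial.eval (P 1) (f i)) - fun i => MvPolynomial.eval (P 0) (f i),
      (fun i => MvPolynomial.eval (P 2) (f i)) - fun i => MvPolynomial.eval (P 0) (f i),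
      (fun i => MvPolynomial.eval (P 2) (f i)) - fun i => MvPolynomial.eval (P 1) (f i)] = 0 := by
    apply tri_zero φ I hI
    intro ℓ a
    fin_cases ℓ <;> simp only [Matrix.cons_val_zero, Matrix.cons_val_one, Matrix.head_cons,
      Matrix.cons_val_two, Matrix.tail_cons, Pi.sub_apply]
    · exact hev10 a
    · exact hev20 a
    · exact hev21 a
  have hR1 : φ ![Dl f 1 (P 0) (P 1 - P 0), Dl f 1 (P 0) (P 1 - P 0),
      Dl f 2 (P 0) (P 2 - P 0)] = 0 := by
    apply tri_zero φ I hI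
    intro ℓ a
    fin_cases ℓ <;> simp only [Matrix.cons_val_zero, Matrix.cons_val_one, Matrix.head_cons,
      Matrix.cons_val_two, Matrix.tail_cons]
    · exact hDl1 _ h10 a
    · exact hDl1 _ h10 a
    · exact hDl2 _ h20 a
  have hR2 : φ ![Dl f 1 (P 0) (P 2 - P 0), Dl f 1 (P 0) (P 2 - P 0),
      Dl f 2 (P 0) (P 1 - P 0)] = 0 := by
    apply tri_zero φ I hI
    intro ℓ a
    fin_cases ℓ <;> simp only [Matrix.cons_val_zero, Matrix.cons_val_one, Matrix.head_cons,
      Matrix.cons_val_two, Matrix.tail_cons]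
    · exact hDl1 _ h20 a
    · exact hDl1 _ h20 a
    · exact hDl2 _ h10 a
  rw [hLHS, hR1, hR2]
  simp
end

section
/- Let R be a commutative ℚ-algebra, U = Rⁿ, ι : Rᵐ → Rⁿ a polynomial embedding, λ a symmetric affine connection on Rⁿ with Christoffel symbol Γ (i.e. λ(P,Q,S) = Q + S − P + Γ_P[Q−P, S−P] with each Γ_P symmetric bilinear, P ↦ Γ_P polynomial). If P, Q, S ∈ Rᵐ with Q − P, S − P ∈ D(m), and the pulled-back connection has Christoffel symbol Γ̃, then the transformation law Γ_{ι(P)}[ι(Q)−ι(P), ι(S)−ι(P)] = Dι(P)[Γ̃_P[Q−P, S−P]] + D²ι(P)[Q−P, S−P] holds. -/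
/-- Evaluation of a polynomial map `Rᵐ → Rⁿ` given by a family of polynomials. -/
noncomputable def evmap {R : Type*} [CommRing R] {m n : ℕ}
    (I : Fin n → MvPolynomial (Fin m) R) (x : Fin m → R) : Fin n → R :=
  fun i => MvPolynomial.eval x (I i)

/-- First formal derivative of a polynomial map `Rᵐ → Rⁿ` at `P` applied to `v`. -/
noncomputable def D1map {R : Type*} [CommRing R] {m n : ℕ}
    (I : Fin n → MvPolynomial (Fin m) R) (P v : Fin m → R) : Fin n → R :=
  fun i => ∑ a : Fin m, MvPolynomial.eval P (MvPolynomial.pderiv a (I i)) * v a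

/-- Second formal derivative of a polynomial map `Rᵐ → Rⁿ` at `P` applied to `(v, w)`. -/
noncomputable def D2map {R : Type*} [CommRing R] {m n : ℕ}
    (I : Fin n → MvPolynomial (Fin m) R) (P v w : Fin m → R) : Fin n → R :=
  fun i => ∑ a : Fin m, ∑ b : Fin m,
    MvPolynomial.eval P (MvPolynomial.pderiv a (MvPolynomial.pderiv b (I i))) * v a * w b

open MvPolynomial Finset


lemma taylor2 {R : Type*} [CommRing R] {m : ℕ} (P v w u : Fin m → R)
    (hu2 : ∀ a b, u a * u b = v a * w b + w a * v b)
    (hvwu : ∀ a b c, v a * w b * u c = 0)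
    (f : MvPolynomial (Fin m) R) :
    MvPolynomial.eval (P + u) f = MvPolynomial.eval P f
      + (∑ a, MvPolynomial.eval P (MvPolynomial.pderiv a f) * u a)
      + ∑ a, ∑ b, MvPolynomial.eval P (MvPolynomial.pderiv a (MvPolynomial.pderiv b f)) * v a * w b := by
  induction f using MvPolynomial.induction_on with
  | C r => simp
  | add p q hp hq =>
      simp only [map_add, hp, hq, add_mul, Finset.sum_add_distrib]
      ring
  | mul_X p c hp =>
      have e1 : ∀ (g : MvPolynomial (Fin m) R) (a : Fin m),
          pderiv a (g * X c) = pderiv a g * X c + if a = c then g else 0 := by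
        intro g a
        rw [pderiv_mul]
        by_cases h : a = c <;> simp [h]
      have e3 : ∀ (a b : Fin m), pderiv a (if b = c then p else 0)
          = if b = c then pderiv a p else 0 := by
        intro a b; split <;> simp
      have hMu : (∑ a, ∑ b, eval P (pderiv a (pderiv b p)) * v a * w b) * u c = 0 := by
        rw [Finset.sum_mul]
        refine Finset.sum_eq_zero fun a _ => ?_
        rw [Finset.sum_mul]
        refine Finset.sum_eq_zero fun b _ => ?_
        linear_combination eval P (pderiv a (pderiv b p)) * hvwu a b c
      have hLu : (∑ a, eval P (pderiv a p) * u a) * u c =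
          (∑ a, eval P (pderiv a p) * v a * w c) + ∑ a, eval P (pderiv a p) * v c * w a := by
        rw [Finset.sum_mul, ← Finset.sum_add_distrib]
        refine Finset.sum_congr rfl fun a _ => ?_
        linear_combination eval P (pderiv a p) * hu2 a c
      simp only [eval_mul, eval_X, Pi.add_apply, hp, e1, e3, map_add, map_zero,
        apply_ite (MvPolynomial.eval P), add_mul, ite_mul, zero_mul, Finset.sum_add_distrib,
        Finset.sum_ite_eq', Finset.mem_univ, if_true]
      have hPc1 : ∑ x : Fin m, eval P (pderiv x p) * P c * u x
          = (∑ x : Fin m, eval P (pderiv x p) * u x) * P c := by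
        rw [Finset.sum_mul]; exact Finset.sum_congr rfl fun a _ => by ring
      have hPc2 : ∑ x : Fin m, ∑ y : Fin m, eval P (pderiv x (pderiv y p)) * P c * v x * w y
          = (∑ x : Fin m, ∑ y : Fin m, eval P (pderiv x (pderiv y p)) * v x * w y) * P c := by
        rw [Finset.sum_mul]
        refine Finset.sum_congr rfl fun a _ => ?_
        rw [Finset.sum_mul]
        exact Finset.sum_congr rfl fun b _ => by ring
      have hswap : (∑ x : Fin m, ∑ y : Fin m,
            if x = c then eval P (pderiv y p) * v x * w y else 0)
          = ∑ y : Fin m, eval P (pderiv y p) * v c * w y := by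
        rw [Finset.sum_comm]
        simp
      rw [hPc1, hPc2, hswap]
      linear_combination hLu + hMu

/-- transformation law of Christoffel symbols. If `ι : Rᵐ → Rⁿ` is a
polynomial embedding, `Γ` is the (polynomial, symmetric bilinear) Christoffel symbol of
a symmetric affine connection `λ(P,Q,S) = Q + S − P + Γ_P[Q−P,S−P]` on `Rⁿ`, `Γ̃` is
the Christoffel symbol of the pulled-back connection, i.e.
`ι(Q + S − P + Γ̃_P[Q−P,S−P]) = ι(Q) + ι(S) − ι(P) + Γ_{ι(P)}[ι(Q)−ι(P), ι(S)−ι(P)]`,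
and `Q − P, S − P ∈ D(m)`, then
`Γ_{ι(P)}[ι(Q)−ι(P), ι(S)−ι(P)] = Dι(P)[Γ̃_P[Q−P,S−P]] + D²ι(P)[Q−P,S−P]`. -/
theorem stmt19 {R : Type*} [CommRing R] [Algebra ℚ R] {m n : ℕ}
    (I : Fin n → MvPolynomial (Fin m) R)
    (hinj : Function.Injective (evmap I))
    (Γ : (Fin n → R) → (Fin n → R) → (Fin n → R) → (Fin n → R))
    (G : Fin n → Fin n → Fin n → MvPolynomial (Fin n) R)
    (hG : ∀ (X u v : Fin n → R) (i : Fin n),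
      Γ X u v i = ∑ a, ∑ b, MvPolynomial.eval X (G i a b) * u a * v b)
    (hGsymm : ∀ X u v, Γ X u v = Γ X v u)
    (Γt : (Fin m → R) → (Fin m → R) → (Fin m → R) → (Fin m → R))
    (Gt : Fin m → Fin m → Fin m → MvPolynomial (Fin m) R)
    (hGt : ∀ (X u v : Fin m → R) (i : Fin m),
      Γt X u v i = ∑ a, ∑ b, MvPolynomial.eval X (Gt i a b) * u a * v b)
    (hGtsymm : ∀ X u v, Γt X u v = Γt X v u)
    (P Q S : Fin m → R)
    (hQ : ∀ a b : Fin m, (Q - P) a * (Q - P) b = 0)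
    (hS : ∀ a b : Fin m, (S - P) a * (S - P) b = 0)
    (hdef : evmap I (Q + S - P + Γt P (Q - P) (S - P)) =
      evmap I Q + evmap I S - evmap I P +
        Γ (evmap I P) (evmap I Q - evmap I P) (evmap I S - evmap I P)) :
    Γ (evmap I P) (evmap I Q - evmap I P) (evmap I S - evmap I P) =
      D1map I P (Γt P (Q - P) (S - P)) + D2map I P (Q - P) (S - P) := by
  classical
  set v := Q - P with hv
  set w := S - P with hw
  set t := Γt P v w with ht
  have hvt : ∀ a b : Fin m, v a * t b = 0 := by
    intro a b
    rw [ht, hGt, Finset.mul_sum]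
    refine Finset.sum_eq_zero fun c _ => ?_
    rw [Finset.mul_sum]
    refine Finset.sum_eq_zero fun d _ => ?_
    linear_combination MvPolynomial.eval P (Gt b c d) * w d * hQ a c
  have hwt : ∀ a b : Fin m, w a * t b = 0 := by
    intro a b
    rw [ht, hGt, Finset.mul_sum]
    refine Finset.sum_eq_zero fun c _ => ?_
    rw [Finset.mul_sum]
    refine Finset.sum_eq_zero fun d _ => ?_
    linear_combination MvPolynomial.eval P (Gt b c d) * v c * hS a d
  have htt : ∀ a b : Fin m, t a * t b = 0 := by
    intro a b
    rw [ht, hGt, Finset.sum_mul]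
    refine Finset.sum_eq_zero fun c _ => ?_
    rw [Finset.sum_mul]
    refine Finset.sum_eq_zero fun d _ => ?_
    linear_combination MvPolynomial.eval P (Gt a c d) * w d * hvt c b
  have hu2 : ∀ a b : Fin m, (v + w + t) a * (v + w + t) b = v a * w b + w a * v b := by
    intro a b
    simp only [Pi.add_apply]
    linear_combination hQ a b + hS a b + htt a b + hvt a b + hvt b a + hwt a b + hwt b a
  have hvwu : ∀ a b c : Fin m, v a * w b * (v + w + t) c = 0 := by
    intro a b c
    simp only [Pi.add_apply]
    linear_combination w b * hQ a c + v a * hS b c + w b * hvt a c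
  have hQP : Q = P + v := by rw [hv]; ring
  have hSP : S = P + w := by rw [hw]; ring
  have harg : Q + S - P + t = P + (v + w + t) := by rw [hv, hw]; ring
  funext i
  have hEQ : MvPolynomial.eval Q (I i) = MvPolynomial.eval P (I i)
      + ∑ a : Fin m, MvPolynomial.eval P (MvPolynomial.pderiv a (I i)) * v a := by
    rw [hQP]
    simpa using taylor2 P v (0 : Fin m → R) v
      (fun a b => by simpa using hQ a b) (fun a b c => by simp) (I i)
  have hES : MvPolynomial.eval S (I i) = MvPolynomial.eval P (I i)
      + ∑ a : Fin m, MvPolynomial.eval P (MvPolynomial.pderiv a (I i)) * w a := by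
    rw [hSP]
    simpa using taylor2 P w (0 : Fin m → R) w
      (fun a b => by simpa using hS a b) (fun a b c => by simp) (I i)
  have hsplit : (∑ a : Fin m, MvPolynomial.eval P (MvPolynomial.pderiv a (I i)) * (v + w + t) a)
      = (∑ a : Fin m, MvPolynomial.eval P (MvPolynomial.pderiv a (I i)) * v a)
        + (∑ a : Fin m, MvPolynomial.eval P (MvPolynomial.pderiv a (I i)) * w a)
        + (∑ a : Fin m, MvPolynomial.eval P (MvPolynomial.pderiv a (I i)) * t a) := by
    simp only [Pi.add_apply, mul_add, Finset.sum_add_distrib]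
  have hEM : MvPolynomial.eval (Q + S - P + t) (I i) = MvPolynomial.eval P (I i)
      + (∑ a : Fin m, MvPolynomial.eval P (MvPolynomial.pderiv a (I i)) * v a)
      + (∑ a : Fin m, MvPolynomial.eval P (MvPolynomial.pderiv a (I i)) * w a)
      + (∑ a : Fin m, MvPolynomial.eval P (MvPolynomial.pderiv a (I i)) * t a)
      + ∑ a : Fin m, ∑ b : Fin m,
          MvPolynomial.eval P (MvPolynomial.pderiv a (MvPolynomial.pderiv b (I i))) * v a * w b := by
    rw [harg, taylor2 P v w (v + w + t) hu2 hvwu (I i), hsplit]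
    ring
  have hdefi := congrFun hdef i
  simp only [evmap, Pi.add_apply, Pi.sub_apply] at hdefi
  rw [hEM, hEQ, hES] at hdefi
  simp only [evmap, D1map, D2map, Pi.add_apply]
  linear_combination -hdefi
end
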